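/- Let ζ be an action of a based scheme U on a based scheme T, and let [u,t] ∈ U⋉_ζ T. If t̂* is any element of the set {t*}ζ_{u*} ⊆ τ, then the transpose of [u,t] equals [u*, t̂*]; in particular [u,t]* ∈ U⋉_ζ T. -/
import Mathlib


/-!
Common framework for association schemes, following the paper
"A new semidirect product for association schemes".
-/

/-- The diagonal relation `1_X` on a set `X`. -/
def diagRel (X : Type) : Set (X × X) := {w | w.1 = w.2}

/-- The transpose `s*` of a relation. -/
def transp {X : Type} (s : Set (X × X)) : Set (X × X) := Prod.swap '' s

/-- The structure constant `a_{pqr}`: for `(x,y) ∈ r`, the number of `z` with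
`(x,z) ∈ p` and `(z,y) ∈ q` (well-defined for elements of a scheme). -/
noncomputable def aC {X : Type} (p q r : Set (X × X)) : ℕ :=
  sSup {n | ∃ w ∈ r, n = Nat.card {z : X // (w.1, z) ∈ p ∧ (z, w.2) ∈ q}}

/-- `S` is an association scheme on `X`. -/
def IsScheme {X : Type} (S : Set (Set (X × X))) : Prop :=
  (∀ s ∈ S, s.Nonempty) ∧
  (∀ w : X × X, ∃! s, s ∈ S ∧ w ∈ s) ∧
  diagRel X ∈ S ∧
  (∀ s ∈ S, transp s ∈ S) ∧
  (∀ p ∈ S, ∀ q ∈ S, ∀ r ∈ S, ∀ w ∈ r,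
    Nat.card {z : X // (w.1, z) ∈ p ∧ (z, w.2) ∈ q} = aC p q r)

/-- Complex product of two relations relative to a scheme `S`:
`pq = {r ∈ S : a_{pqr} > 0}`. -/
noncomputable def cmulS {X : Type} (S : Set (Set (X × X))) (p q : Set (X × X)) :
    Set (Set (X × X)) :=
  {r | r ∈ S ∧ 0 < aC p q r}

/-- Complex product of two subsets of a scheme. -/
noncomputable def setMulS {X : Type} (S : Set (Set (X × X)))
    (Pp Qq : Set (Set (X × X))) : Set (Set (X × X)) :=
  ⋃ p ∈ Pp, ⋃ q ∈ Qq, cmulS S p q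

/-- `T` is a closed subset of the scheme `S` (i.e. `T ⊆ S` and `T*T ⊆ T`). -/
def IsClosedIn {X : Type} (S T : Set (Set (X × X))) : Prop :=
  T ⊆ S ∧ ∀ p ∈ T, ∀ q ∈ T, cmulS S (transp p) q ⊆ T

/-- `T` is a normal subset of the scheme `S` (i.e. `pT = Tp` for all `p ∈ S`). -/
noncomputable def IsNormalIn {X : Type} (S T : Set (Set (X × X))) : Prop :=
  ∀ p ∈ S, setMulS S {p} T = setMulS S T {p}

/-- `xs = {y : (x,y) ∈ s}`. -/
def pimg {X : Type} (s : Set (X × X)) (x : X) : Set X := {y | (x, y) ∈ s}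

/-- The coset `xT` of a (closed) subset `T` of a scheme. -/
def coset {X : Type} (T : Set (Set (X × X))) (x : X) : Set X :=
  {y | ∃ t ∈ T, (x, y) ∈ t}

/-- The set `X/T` of cosets. -/
def cosets {X : Type} (T : Set (Set (X × X))) : Set (Set X) :=
  {C | ∃ x, C = coset T x}

/-- The quotient relation `s^T` on cosets. -/
def quotRel {X : Type} (T : Set (Set (X × X))) (s : Set (X × X)) :
    Set (Set X × Set X) :=
  {w | ∃ x₁ x₂, w = (coset T x₁, coset T x₂) ∧
    ∃ p ∈ s, p.1 ∈ coset T x₁ ∧ p.2 ∈ coset T x₂}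

/-- The relations of the quotient scheme `S//T`. -/
def quotS {X : Type} (S T : Set (Set (X × X))) : Set (Set (Set X × Set X)) :=
  {r | ∃ s ∈ S, r = quotRel T s}

/-- A presentation of a (based) scheme: a set of points inside an ambient type,
a set of relations, and a basepoint. -/
structure Pres (P : Type) where
  pts : Set P
  rels : Set (Set (P × P))
  base : P

/-- A scheme `S` on the whole of `X`, based at `x0`, as a presentation. -/
def fullPres {X : Type} (S : Set (Set (X × X))) (x0 : X) : Pres X :=
  ⟨Set.univ, S, x0⟩

/-- The quotient scheme `S//T` on `X/T`, based at `x0 T`, as a presentation. -/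
def quotPres {X : Type} (S T : Set (Set (X × X))) (x0 : X) : Pres (Set X) :=
  ⟨cosets T, quotS S T, coset T x0⟩

/-- The subscheme of a scheme defined by the coset `xT` of a closed subset `T`,
as a presentation. -/
def subPres {X : Type} (T : Set (Set (X × X))) (x : X) : Pres X :=
  ⟨coset T x, {r | ∃ t ∈ T, r = t ∩ (coset T x ×ˢ coset T x)}, x⟩

/-- `f` is a morphism of schemes between two presentations: it maps points to
points, and pairs lying in the same relation to pairs lying in the same relation. -/
def IsMorOn {P Q : Type} (A : Pres P) (B : Pres Q) (f : P → Q) : Prop :=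
  Set.MapsTo f A.pts B.pts ∧
  ∀ s ∈ A.rels, ∀ w ∈ s, ∀ w' ∈ s,
    ∃ t ∈ B.rels, (f w.1, f w.2) ∈ t ∧ (f w'.1, f w'.2) ∈ t

/-- The induced map on scheme elements sends `s` to `t` (i.e. `s φ_S = t`):
every pair of `s` is mapped into `t`. -/
def elemMapsTo {P Q : Type} (f : P → Q) (s : Set (P × P)) (t : Set (Q × Q)) : Prop :=
  ∀ w ∈ s, (f w.1, f w.2) ∈ t

/-- `f` is an isomorphism of schemes: a morphism which is bijective on points and
whose induced map on scheme elements is bijective. -/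
def IsIsoOn {P Q : Type} (A : Pres P) (B : Pres Q) (f : P → Q) : Prop :=
  IsMorOn A B f ∧ Set.BijOn f A.pts B.pts ∧
  ∀ t ∈ B.rels, ∃! s, s ∈ A.rels ∧ elemMapsTo f s t

/-- A based isomorphism of schemes. -/
def IsBasedIsoOn {P Q : Type} (A : Pres P) (B : Pres Q) (f : P → Q) : Prop :=
  IsIsoOn A B f ∧ f A.base = B.base

/-- A based association scheme on a finite based set. -/
structure BScheme : Type 1 where
  X : Type
  fin : Fintype X
  base : X
  S : Set (Set (X × X))
  isScheme : IsScheme S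

/-- A morphism in the category 𝒞: a normal closed subset on each side together
with a based isomorphism between the corresponding quotient schemes. -/
structure HomC (A B : BScheme) where
  TN : Set (Set (A.X × A.X))
  UN : Set (Set (B.X × B.X))
  TN_cl : IsClosedIn A.S TN
  TN_n : IsNormalIn A.S TN
  UN_cl : IsClosedIn B.S UN
  UN_n : IsNormalIn B.S UN
  f : Set A.X → Set B.X
  iso : IsBasedIsoOn (quotPres A.S TN A.base) (quotPres B.S UN B.base) f

/-- `t^{T_φ} φ̃ = u^{U_φ}`: the induced map on quotient scheme elements sends
the class of `t` to the class of `u`. -/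
def elemRel {A B : BScheme} (φ : HomC A B) (t : Set (A.X × A.X))
    (u : Set (B.X × B.X)) : Prop :=
  elemMapsTo φ.f (quotRel φ.TN t) (quotRel φ.UN u)

/-- The normal closed subset `T_{φψ}` of the composite. -/
def Tcomp {A B C : BScheme} (φ : HomC A B) (ψ : HomC B C) :
    Set (Set (A.X × A.X)) :=
  {t | t ∈ A.S ∧ ∃ u ∈ B.S, elemRel φ t u ∧ elemRel ψ u (diagRel C.X)}

/-- The normal closed subset `V_{φψ}` of the composite. -/
def Vcomp {A B C : BScheme} (φ : HomC A B) (ψ : HomC B C) :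
    Set (Set (C.X × C.X)) :=
  {v | v ∈ C.S ∧ ∃ u ∈ B.S, elemRel φ (diagRel A.X) u ∧ elemRel ψ u v}

/-- `ρ` is a composite of `φ` and `ψ` in the category 𝒞. -/
def IsComposite {A B C : BScheme} (φ : HomC A B) (ψ : HomC B C) (ρ : HomC A C) : Prop :=
  ρ.TN = Tcomp φ ψ ∧ ρ.UN = Vcomp φ ψ ∧
  ∀ (x : A.X) (y : B.X) (z : C.X),
    φ.f (coset φ.TN x) = coset φ.UN y →
    ψ.f (coset ψ.TN y) = coset ψ.UN z →
    ρ.f (coset (Tcomp φ ψ) x) = coset (Vcomp φ ψ) z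

/-- The identity morphism of 𝒞 at `A`: both normal closed subsets are `{1_X}`
and the isomorphism is the identity of `A//{1_X}`. -/
def IsIdHom {A : BScheme} (ι : HomC A A) : Prop :=
  ι.TN = {diagRel A.X} ∧ ι.UN = {diagRel A.X} ∧
  ∀ x : A.X, ι.f (coset {diagRel A.X} x) = coset {diagRel A.X} x

/-- A `τ_T`-scheme on the based set underlying `T`. -/
structure TauSchemeOn (T : BScheme) where
  rels : Set (Set (T.X × T.X))
  isScheme : IsScheme rels
  alpha : Set (T.X × T.X) → Set (T.X × T.X)
  alpha_bij : Set.BijOn alpha T.S rels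
  alpha_one : alpha (diagRel T.X) = diagRel T.X
  alpha_star : ∀ p ∈ T.S, alpha (transp p) = transp (alpha p)
  alpha_const : ∀ p ∈ T.S, ∀ q ∈ T.S, ∀ r ∈ T.S,
    aC p q r = aC (alpha p) (alpha q) (alpha r)

/-- The based scheme underlying a `τ`-scheme. -/
abbrev TauSchemeOn.toB {T : BScheme} (Z : TauSchemeOn T) : BScheme :=
  ⟨T.X, T.fin, T.base, Z.rels, Z.isScheme⟩

/-- An action `ζ` of a based scheme `U` on a based scheme `T`. -/
structure SchemeAction (U T : BScheme) where
  /-- the `τ`-scheme `ζ_y = (T_y, α^y)` for each `y ∈ Y` -/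
  Z : U.X → TauSchemeOn T
  /-- the morphism `ζ_{y₁}^{y₂} ∈ Hom_𝒞(T_{y₁}, T_{y₂})` -/
  hom : ∀ y1 y2 : U.X, HomC (Z y1).toB (Z y2).toB
  /-- (1) `T_{y*} = T` -/
  base_rels : (Z U.base).rels = T.S
  /-- (1) `α^{y*} = id` -/
  base_alpha : ∀ p, (Z U.base).alpha p = p
  /-- (2) `ζ_y^y` is the identity morphism -/
  hom_refl_TN : ∀ y : U.X, (hom y y).TN = {diagRel T.X}
  hom_refl_UN : ∀ y : U.X, (hom y y).UN = {diagRel T.X}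
  hom_refl_f : ∀ (y : U.X) (x : T.X),
    (hom y y).f (coset {diagRel T.X} x) = coset {diagRel T.X} x
  /-- (3) `ζ_{y₂}^{y₁} = (ζ_{y₁}^{y₂})*` -/
  hom_symm_TN : ∀ y1 y2 : U.X, (hom y2 y1).TN = (hom y1 y2).UN
  hom_symm_UN : ∀ y1 y2 : U.X, (hom y2 y1).UN = (hom y1 y2).TN
  hom_symm_f : ∀ y1 y2 : U.X,
    Set.InvOn (hom y2 y1).f (hom y1 y2).f
      (cosets (hom y1 y2).TN) (cosets (hom y1 y2).UN)
  /-- (4) `ζ_{y₁}^{y₂}(τ)` depends only on the element `u ∈ U` containing `(y₁,y₂)` -/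
  zeta_welldef : ∀ u ∈ U.S, ∀ y1 y2 y1' y2' : U.X, (y1, y2) ∈ u → (y1', y2') ∈ u →
    ∀ Pp : Set (Set (T.X × T.X)),
      {u' | u' ∈ T.S ∧ ∃ t ∈ Pp,
        elemRel (hom y1 y2) ((Z y1).alpha t) ((Z y2).alpha u')} =
      {u' | u' ∈ T.S ∧ ∃ t ∈ Pp,
        elemRel (hom y1' y2') ((Z y1').alpha t) ((Z y2').alpha u')}
  /-- (5) `ζ_{y₁}^{y₃} ≤ ζ_{y₁}^{y₂} ζ_{y₂}^{y₃}` -/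
  le_comp : ∀ y1 y2 y3 : U.X,
    (hom y1 y3).TN ⊆ Tcomp (hom y1 y2) (hom y2 y3) ∧
    (hom y1 y3).UN ⊆ Vcomp (hom y1 y2) (hom y2 y3) ∧
    ∀ x x2 x3 : T.X,
      (hom y1 y2).f (coset (hom y1 y2).TN x) = coset (hom y1 y2).UN x2 →
      (hom y2 y3).f (coset (hom y2 y3).TN x2) = coset (hom y2 y3).UN x3 →
      (hom y1 y3).f (coset (hom y1 y3).TN x) ⊆
        coset (Vcomp (hom y1 y2) (hom y2 y3)) x3

/-- The map `ζ_u` on subsets of `τ` induced by any `(y₁,y₂) ∈ u`. -/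
def SchemeAction.zetaU {U T : BScheme} (act : SchemeAction U T)
    (u : Set (U.X × U.X)) (Pp : Set (Set (T.X × T.X))) : Set (Set (T.X × T.X)) :=
  {u' | ∃ y1 y2 : U.X, (y1, y2) ∈ u ∧ u' ∈ T.S ∧
    ∃ t ∈ Pp, elemRel (act.hom y1 y2) ((act.Z y1).alpha t) ((act.Z y2).alpha u')}

/-- The relation `[u,t]` on `Y × X`. -/
def SchemeAction.rel {U T : BScheme} (act : SchemeAction U T)
    (u : Set (U.X × U.X)) (t : Set (T.X × T.X)) :
    Set ((U.X × T.X) × (U.X × T.X)) :=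
  {w | (w.1.1, w.2.1) ∈ u ∧
    ((act.hom w.1.1 w.2.1).f (coset (act.hom w.1.1 w.2.1).TN w.1.2),
      coset (act.hom w.1.1 w.2.1).UN w.2.2) ∈
      quotRel (act.hom w.1.1 w.2.1).UN ((act.Z w.2.1).alpha t)}

/-- The semidirect product `U ⋉_ζ T` as a set of relations on `Y × X`. -/
def SchemeAction.sdp {U T : BScheme} (act : SchemeAction U T) :
    Set (Set ((U.X × T.X) × (U.X × T.X))) :=
  {r | ∃ u ∈ U.S, ∃ t ∈ T.S, r = act.rel u t}

/-- The valency `n_s = a_{s s* 1}` of a relation. -/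
noncomputable def nval {X : Type} (s : Set (X × X)) : ℕ :=
  aC s (transp s) (diagRel X)

section AuxStmt4

variable {X : Type}

lemma transp_transp' (s : Set (X × X)) : transp (transp s) = s := by
  simp [transp, Set.image_image]

lemma mem_transp' {s : Set (X × X)} {w : X × X} : w ∈ transp s ↔ w.swap ∈ s := by
  constructor
  · rintro ⟨v, hv, rfl⟩; simpa using hv
  · intro h; exact ⟨w.swap, h, by simp⟩

lemma scheme_unique {S : Set (Set (X × X))} (hS : IsScheme S) {s s' : Set (X × X)}
    (hs : s ∈ S) (hs' : s' ∈ S) {w : X × X} (h : w ∈ s) (h' : w ∈ s') : s = s' := by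
  obtain ⟨r, -, hr⟩ := hS.2.1 w
  rw [hr s ⟨hs, h⟩, hr s' ⟨hs', h'⟩]

lemma scheme_mem_exists {S : Set (Set (X × X))} (hS : IsScheme S) (w : X × X) :
    ∃ s ∈ S, w ∈ s := by
  obtain ⟨r, ⟨h1, h2⟩, -⟩ := hS.2.1 w
  exact ⟨r, h1, h2⟩

lemma triangle [Finite X] {S : Set (Set (X × X))} (hS : IsScheme S) {p q r : Set (X × X)}
    (hp : p ∈ S) (hq : q ∈ S) (hr : r ∈ S) {x y z x' z' : X}
    (hxy : (x, y) ∈ p) (hyz : (y, z) ∈ q) (hxz : (x, z) ∈ r) (h' : (x', z') ∈ r) :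
    ∃ y', (x', y') ∈ p ∧ (y', z') ∈ q := by
  have e1 := hS.2.2.2.2 p hp q hq r hr (x, z) hxz
  have e2 := hS.2.2.2.2 p hp q hq r hr (x', z') h'
  have hpos : 0 < Nat.card {w : X // (x, w) ∈ p ∧ (w, z) ∈ q} := by
    haveI : Nonempty {w : X // (x, w) ∈ p ∧ (w, z) ∈ q} := ⟨⟨y, hxy, hyz⟩⟩
    exact Nat.card_pos
  rw [e1, ← e2] at hpos
  obtain ⟨⟨⟨y', h1, h2⟩⟩, -⟩ := Nat.card_pos_iff.mp hpos
  exact ⟨y', h1, h2⟩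

lemma chain_mem [Finite X] {S TN : Set (Set (X × X))} (hS : IsScheme S)
    (hT : IsClosedIn S TN) {p q : Set (X × X)} (hp : p ∈ TN) (hq : q ∈ TN)
    {x y z : X} (h1 : (y, x) ∈ p) (h2 : (y, z) ∈ q) : ∃ r ∈ TN, (x, z) ∈ r := by
  obtain ⟨r, hrS, hxz⟩ := scheme_mem_exists hS (x, z)
  refine ⟨r, hT.2 p hp q hq ⟨hrS, ?_⟩, hxz⟩
  have e := hS.2.2.2.2 (transp p) (hS.2.2.2.1 p (hT.1 hp)) q (hT.1 hq) r hrS (x, z) hxz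
  rw [← e]
  haveI : Nonempty {w : X // (x, w) ∈ transp p ∧ (w, z) ∈ q} :=
    ⟨⟨y, mem_transp'.mpr h1, h2⟩⟩
  exact Nat.card_pos

lemma diag_mem_closed [Finite X] {S TN : Set (Set (X × X))} (hS : IsScheme S)
    (hT : IsClosedIn S TN) (hne : TN.Nonempty) : diagRel X ∈ TN := by
  obtain ⟨p, hp⟩ := hne
  obtain ⟨⟨a, b⟩, hab⟩ := hS.1 p (hT.1 hp)
  obtain ⟨r, hr, hbb⟩ := chain_mem hS hT hp hp hab hab
  have : r = diagRel X := scheme_unique hS (hT.1 hr) hS.2.2.1 hbb rfl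
  rwa [this] at hr

lemma transp_mem_closed [Finite X] {S TN : Set (Set (X × X))} (hS : IsScheme S)
    (hT : IsClosedIn S TN) {p : Set (X × X)} (hp : p ∈ TN) : transp p ∈ TN := by
  have hd := diag_mem_closed hS hT ⟨p, hp⟩
  obtain ⟨⟨a, b⟩, hab⟩ := hS.1 p (hT.1 hp)
  obtain ⟨r, hr, hba⟩ := chain_mem hS hT hp hd hab rfl
  have : r = transp p :=
    scheme_unique hS (hT.1 hr) (hS.2.2.2.1 p (hT.1 hp)) hba (mem_transp'.mpr hab)
  rwa [this] at hr

lemma coset_chain [Finite X] {S TN : Set (Set (X × X))} (hS : IsScheme S)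
    (hT : IsClosedIn S TN) {x a z : X} (ha : a ∈ coset TN x) {q : Set (X × X)}
    (hq : q ∈ TN) (h : (a, z) ∈ q) : z ∈ coset TN x := by
  obtain ⟨p, hp, hxa⟩ := ha
  obtain ⟨r, hr, hxz⟩ := chain_mem hS hT (transp_mem_closed hS hT hp) hq
    (mem_transp'.mpr hxa) h
  exact ⟨r, hr, hxz⟩

lemma quotRel_swap {TN : Set (Set (X × X))} {s : Set (X × X)} {w : Set X × Set X}
    (h : w ∈ quotRel TN s) : w.swap ∈ quotRel TN (transp s) := by
  obtain ⟨x1, x2, hw, p, hp, h1, h2⟩ := h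
  exact ⟨x2, x1, by rw [hw]; rfl, p.swap, ⟨p, hp, rfl⟩, h2, h1⟩

lemma quot_sub [Finite X] {S TN : Set (Set (X × X))} (hS : IsScheme S)
    (hT : IsClosedIn S TN) {s r : Set (X × X)} (hs : s ∈ S) (hr : r ∈ S)
    {w : Set X × Set X} (hws : w ∈ quotRel TN s) (hwr : w ∈ quotRel TN r) :
    quotRel TN s ⊆ quotRel TN r := by
  obtain ⟨a1, a2, hw1, p, hp, hp1, hp2⟩ := hws
  obtain ⟨b1, b2, hw2, q, hq, hq1, hq2⟩ := hwr
  rw [hw1] at hw2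
  have e1 : coset TN a1 = coset TN b1 := congrArg Prod.fst hw2
  have e2 : coset TN a2 = coset TN b2 := congrArg Prod.snd hw2
  rw [← e1] at hq1
  rw [← e2] at hq2
  obtain ⟨ta, hta, h1a⟩ := hp1
  obtain ⟨tb, htb, h1b⟩ := hq1
  obtain ⟨t1, ht1, hpq1⟩ := chain_mem hS hT hta htb h1a h1b
  obtain ⟨tc, htc, h2c⟩ := hp2
  obtain ⟨td, htd, h2d⟩ := hq2
  obtain ⟨t2, ht2, hpq2⟩ := chain_mem hS hT htc htd h2c h2d
  obtain ⟨m, hm, hmm⟩ := scheme_mem_exists hS (q.1, p.2)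
  rintro w' ⟨c1, c2, hw', p', hp', hp1', hp2'⟩
  obtain ⟨z, hz1, hz2⟩ :=
    triangle hS (hT.1 ht1) hm hs hpq1 hmm (show (p.1, p.2) ∈ s from hp) hp'
  obtain ⟨v, hv1, hv2⟩ :=
    triangle hS hr (hS.2.2.2.1 t2 (hT.1 ht2)) hm
      (show (q.1, q.2) ∈ r from hq) (mem_transp'.mpr hpq2) hmm hz2
  refine ⟨c1, c2, hw', (z, v), hv1, ?_, ?_⟩
  · exact coset_chain hS hT hp1' ht1 hz1
  · exact coset_chain hS hT hp2' ht2 (mem_transp'.mp hv2)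

end AuxStmt4

theorem stmt4 (U T : BScheme) (act : SchemeAction U T)
    (u : Set (U.X × U.X)) (hu : u ∈ U.S)
    (t : Set (T.X × T.X)) (ht : t ∈ T.S)
    (thatstar : Set (T.X × T.X))
    (hts : thatstar ∈ act.zetaU (transp u) {transp t}) :
    transp (act.rel u t) = act.rel (transp u) thatstar ∧
    transp (act.rel u t) ∈ act.sdp := by
  haveI := T.fin
  haveI := U.fin
  obtain ⟨a, b, hab, hth, t'', ht'', helem⟩ := hts
  have htu : transp u ∈ U.S := U.isScheme.2.2.2.1 u hu
  have htt : transp t ∈ T.S := T.isScheme.2.2.2.1 t ht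
  have htth : transp thatstar ∈ T.S := T.isScheme.2.2.2.1 thatstar hth
  have key : ∀ y1 y2 : U.X, (y1, y2) ∈ u →
      elemRel (act.hom y2 y1) ((act.Z y2).alpha (transp t)) ((act.Z y1).alpha thatstar) := by
    intro y1 y2 h12
    have h21 : (y2, y1) ∈ transp u := ⟨(y1, y2), h12, rfl⟩
    have hset := act.zeta_welldef (transp u) htu a b y2 y1 hab h21 {transp t}
    have hmem : thatstar ∈ {u' | u' ∈ T.S ∧ ∃ tt ∈ ({transp t} : Set _),
        elemRel (act.hom a b) ((act.Z a).alpha tt) ((act.Z b).alpha u')} :=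
      ⟨hth, t'', ht'', helem⟩
    rw [hset] at hmem
    obtain ⟨-, t3, ht3, h3⟩ := hmem
    rw [Set.mem_singleton_iff] at ht3
    subst ht3
    exact h3
  have main : transp (act.rel u t) = act.rel (transp u) thatstar := by
    ext w
    obtain ⟨⟨y2, x2⟩, y1, x1⟩ := w
    rw [mem_transp']
    show ((y1, x1), (y2, x2)) ∈ act.rel u t ↔ ((y2, x2), (y1, x1)) ∈ act.rel (transp u) thatstar
    set φ := act.hom y1 y2 with hφ
    set ψ := act.hom y2 y1 with hψ
    have hsT : ψ.TN = φ.UN := act.hom_symm_TN y1 y2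
    have hsU : ψ.UN = φ.TN := act.hom_symm_UN y1 y2
    have hinv : Set.InvOn ψ.f φ.f (cosets φ.TN) (cosets φ.UN) := act.hom_symm_f y1 y2
    constructor
    · rintro ⟨h12, hq⟩
      have h12' : (y1, y2) ∈ u := h12
      have hq' : (φ.f (coset φ.TN x1), coset φ.UN x2) ∈
          quotRel φ.UN ((act.Z y2).alpha t) := hq
      have helemψ := key y1 y2 h12'
      unfold elemRel at helemψ
      rw [hsT, hsU] at helemψ
      refine ⟨⟨(y1, y2), h12', rfl⟩, ?_⟩
      show (ψ.f (coset ψ.TN x2), coset ψ.UN x1) ∈ quotRel ψ.UN ((act.Z y1).alpha thatstar)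
      rw [hsT, hsU]
      have h1 : ((coset φ.UN x2, φ.f (coset φ.TN x1)) : Set T.X × Set T.X) ∈
          quotRel φ.UN (transp ((act.Z y2).alpha t)) := quotRel_swap hq'
      rw [← (act.Z y2).alpha_star t ht] at h1
      have h2 : ((ψ.f (coset φ.UN x2), ψ.f (φ.f (coset φ.TN x1))) : Set T.X × Set T.X) ∈
          quotRel φ.TN ((act.Z y1).alpha thatstar) := helemψ _ h1
      have h3 : ψ.f (φ.f (coset φ.TN x1)) = coset φ.TN x1 := hinv.1 ⟨x1, rfl⟩
      rw [h3] at h2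
      exact h2
    · rintro ⟨h21, hq⟩
      have h21' : (y2, y1) ∈ transp u := h21
      have h12 : (y1, y2) ∈ u := mem_transp'.mp h21'
      have hq0 : (ψ.f (coset ψ.TN x2), coset ψ.UN x1) ∈
          quotRel ψ.UN ((act.Z y1).alpha thatstar) := hq
      rw [hsT, hsU] at hq0
      have helemψ := key y1 y2 h12
      unfold elemRel at helemψ
      rw [hsT, hsU] at helemψ
      refine ⟨h12, ?_⟩
      show (φ.f (coset φ.TN x1), coset φ.UN x2) ∈ quotRel φ.UN ((act.Z y2).alpha t)
      have hS1 : IsScheme (act.Z y1).rels := (act.Z y1).isScheme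
      have hS2 : IsScheme (act.Z y2).rels := (act.Z y2).isScheme
      have hTNcl : IsClosedIn (act.Z y1).rels φ.TN := φ.TN_cl
      have hUNcl : IsClosedIn (act.Z y2).rels φ.UN := φ.UN_cl
      have hαt : (act.Z y2).alpha t ∈ (act.Z y2).rels := (act.Z y2).alpha_bij.1 ht
      have hαtth : (act.Z y1).alpha (transp thatstar) ∈ (act.Z y1).rels :=
        (act.Z y1).alpha_bij.1 htth
      -- TN is nonempty, so it contains the diagonal
      have hTNne : φ.TN.Nonempty := by
        obtain ⟨xx1, xx2, -, p, -, hp1, -⟩ := hq0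
        obtain ⟨tt, htt', -⟩ := hp1
        exact ⟨tt, htt'⟩
      have hdTN : diagRel T.X ∈ φ.TN := diag_mem_closed hS1 hTNcl hTNne
      -- UN is nonempty as well, via the isomorphism φ
      have hφuniq := φ.iso.1.2.2
      have hdUN : diagRel T.X ∈ φ.UN := by
        obtain ⟨sq, ⟨⟨s1, hs1, rfl⟩, hmap1⟩, -⟩ :=
          hφuniq (quotRel φ.UN ((act.Z y2).alpha t)) ⟨(act.Z y2).alpha t, hαt, rfl⟩
        obtain ⟨⟨aa, bb⟩, hab1⟩ := hS1.1 s1 hs1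
        have hm : ((coset φ.TN aa, coset φ.TN bb) : Set T.X × Set T.X) ∈ quotRel φ.TN s1 :=
          ⟨aa, bb, rfl, (aa, bb), hab1, ⟨diagRel T.X, hdTN, rfl⟩, ⟨diagRel T.X, hdTN, rfl⟩⟩
        obtain ⟨zz1, zz2, -, pp, -, hpp1, -⟩ := hmap1 _ hm
        obtain ⟨uu, huu, -⟩ := hpp1
        exact diag_mem_closed hS2 hUNcl ⟨uu, huu⟩
      -- the pair v
      obtain ⟨c1, hc1⟩ := φ.iso.1.1.1 (⟨x1, rfl⟩ : coset φ.TN x1 ∈ cosets φ.TN)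
      obtain ⟨s0, hs0, hc1x2⟩ := scheme_mem_exists hS2 (c1, x2)
      have hv : ((φ.f (coset φ.TN x1), coset φ.UN x2) : Set T.X × Set T.X) ∈
          quotRel φ.UN s0 :=
        ⟨c1, x2, by rw [hc1], (c1, x2), hc1x2,
          ⟨diagRel T.X, hdUN, rfl⟩, ⟨diagRel T.X, hdUN, rfl⟩⟩
      -- the image of v under ψ.f lands in quotRel TN (α1 (transp thatstar))
      have h3' : ψ.f (φ.f (coset φ.TN x1)) = coset φ.TN x1 := hinv.1 ⟨x1, rfl⟩
      have hswap : ((coset φ.TN x1, ψ.f (coset φ.UN x2)) : Set T.X × Set T.X) ∈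
          quotRel φ.TN (transp ((act.Z y1).alpha thatstar)) := quotRel_swap hq0
      rw [← (act.Z y1).alpha_star thatstar hth] at hswap
      have hgv : ((ψ.f (φ.f (coset φ.TN x1)), ψ.f (coset φ.UN x2)) : Set T.X × Set T.X)
          ∈ quotRel φ.TN ((act.Z y1).alpha (transp thatstar)) := by
        rw [h3']
        exact hswap
      -- candidate 1: quotRel UN s0 maps into the target under ψ.f
      have hψmor := ψ.iso.1.1
      have hcand1 : elemMapsTo ψ.f (quotRel φ.UN s0)
          (quotRel φ.TN ((act.Z y1).alpha (transp thatstar))) := by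
        intro w' hw'
        have hstep := hψmor.2 (quotRel ψ.TN s0) (by rw [hsT]; exact ⟨s0, hs0, rfl⟩)
          w' (by rw [hsT]; exact hw')
          (φ.f (coset φ.TN x1), coset φ.UN x2) (by rw [hsT]; exact hv)
        obtain ⟨tB, ⟨sB, hsB, rfl⟩, hin1, hin2⟩ := hstep
        rw [hsU] at hin1 hin2
        have hin2' : ((ψ.f (φ.f (coset φ.TN x1)), ψ.f (coset φ.UN x2)) :
            Set T.X × Set T.X) ∈ quotRel φ.TN sB := hin2
        have hsub := quot_sub hS1 hTNcl hsB hαtth hin2' hgv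
        exact hsub hin1
      -- candidate 2: quotRel UN (α2 t) maps into the target under ψ.f
      have hcand2 : elemMapsTo ψ.f (quotRel φ.UN ((act.Z y2).alpha t))
          (quotRel φ.TN ((act.Z y1).alpha (transp thatstar))) := by
        intro w' hw'
        have h1 := quotRel_swap hw'
        rw [← (act.Z y2).alpha_star t ht] at h1
        have h2 : ((ψ.f w'.2, ψ.f w'.1) : Set T.X × Set T.X) ∈
            quotRel φ.TN ((act.Z y1).alpha thatstar) := helemψ _ h1
        have h4 : ((ψ.f w'.1, ψ.f w'.2) : Set T.X × Set T.X) ∈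
            quotRel φ.TN (transp ((act.Z y1).alpha thatstar)) := quotRel_swap h2
        rw [← (act.Z y1).alpha_star thatstar hth] at h4
        exact h4
      -- uniqueness for ψ forces the two candidates to be equal
      have hψuniq := ψ.iso.1.2.2
      obtain ⟨sss, -, huniq2⟩ := hψuniq (quotRel ψ.UN ((act.Z y1).alpha (transp thatstar)))
        (by rw [hsU]; exact ⟨(act.Z y1).alpha (transp thatstar), hαtth, rfl⟩)
      have e1 : quotRel ψ.TN s0 = sss := huniq2 _
        ⟨(by rw [hsT]; exact ⟨s0, hs0, rfl⟩), by rw [hsT, hsU]; exact hcand1⟩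
      have e2 : quotRel ψ.TN ((act.Z y2).alpha t) = sss := huniq2 _
        ⟨(by rw [hsT]; exact ⟨(act.Z y2).alpha t, hαt, rfl⟩), by rw [hsT, hsU]; exact hcand2⟩
      have e3 := e1.trans e2.symm
      rw [hsT] at e3
      rw [← e3]
      exact hv
  exact ⟨main, by rw [main]; exact ⟨transp u, htu, thatstar, hth, rfl⟩⟩
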